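/- arXiv:1811.05311 — 3 statements merged into one kernel-verified Lean document; each statement's English description precedes it below -/
import Mathlib

section
/- Let ρ, E, R > 0 and let u : ℝ × ℝ → ℝ be a smooth (C^∞) function for which there is a compact set K ⊂ ℝ with u(t,x) = 0 whenever x ∉ K, and suppose u satisfies the rod transverse vibration equation ρ ∂ₜ²u − ρR² ∂ₜ²∂ₓ²u + ER² ∂ₓ⁴u = 0 at every point (t,x). Then the energy H(t) = (1/2)∫_ℝ [ρ (∂ₜu(t,x))² + ρR² (∂ₜ∂ₓu(t,x))² + ER² (∂ₓ²u(t,x))²] dx is constant in t, i.e. H(t) = H(0) for all t ∈ ℝ. -/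
open MeasureTheory

/-- Partial derivative with respect to the first (time) variable. -/
noncomputable def pt (u : ℝ × ℝ → ℝ) : ℝ × ℝ → ℝ :=
  fun p => deriv (fun s => u (s, p.2)) p.1

/-- Partial derivative with respect to the second (space) variable. -/
noncomputable def px (u : ℝ × ℝ → ℝ) : ℝ × ℝ → ℝ :=
  fun p => deriv (fun y => u (p.1, y)) p.2

section API
open Set
variable {u : ℝ × ℝ → ℝ}

lemma pt_eq (hu : ContDiff ℝ (⊤ : ℕ∞) u) (p : ℝ × ℝ) : pt u p = fderiv ℝ u p (1, 0) := by
  have h1 : HasDerivAt (fun s : ℝ => (s, p.2)) ((1:ℝ), (0:ℝ)) p.1 :=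
    (hasDerivAt_id p.1).prodMk (hasDerivAt_const p.1 p.2)
  exact (((hu.differentiable (by simp)) p).hasFDerivAt.comp_hasDerivAt p.1 h1).deriv

lemma px_eq (hu : ContDiff ℝ (⊤ : ℕ∞) u) (p : ℝ × ℝ) : px u p = fderiv ℝ u p (0, 1) := by
  have h1 : HasDerivAt (fun y : ℝ => (p.1, y)) ((0:ℝ), (1:ℝ)) p.2 :=
    (hasDerivAt_const p.2 p.1).prodMk (hasDerivAt_id p.2)
  exact (((hu.differentiable (by simp)) p).hasFDerivAt.comp_hasDerivAt p.2 h1).deriv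

lemma contDiff_pt (hu : ContDiff ℝ (⊤ : ℕ∞) u) : ContDiff ℝ (⊤ : ℕ∞) (pt u) := by
  have h : pt u = fun p => fderiv ℝ u p (1, 0) := funext (pt_eq hu)
  rw [h]
  exact (hu.fderiv_right (by simp)).clm_apply contDiff_const

lemma contDiff_px (hu : ContDiff ℝ (⊤ : ℕ∞) u) : ContDiff ℝ (⊤ : ℕ∞) (px u) := by
  have h : px u = fun p => fderiv ℝ u p (0, 1) := funext (px_eq hu)
  rw [h]
  exact (hu.fderiv_right (by simp)).clm_apply contDiff_const

lemma pt_px_comm (hu : ContDiff ℝ (⊤ : ℕ∞) u) : pt (px u) = px (pt u) := by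
  funext p
  rw [pt_eq (contDiff_px hu), px_eq (contDiff_pt hu)]
  have hpx : (px u) = fun q => fderiv ℝ u q ((0:ℝ), (1:ℝ)) := funext fun q => px_eq hu q
  have hpt : (pt u) = fun q => fderiv ℝ u q ((1:ℝ), (0:ℝ)) := funext fun q => pt_eq hu q
  rw [hpx, hpt]
  have hdf : DifferentiableAt ℝ (fderiv ℝ u) p :=
    ((hu.fderiv_right (m := 1) (WithTop.coe_le_coe.mpr le_top)).differentiable one_ne_zero) p
  rw [fderiv_clm_apply hdf (differentiableAt_const _),
      fderiv_clm_apply hdf (differentiableAt_const _)]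
  simp only [fderiv_const, fderiv_fun_const, Pi.zero_apply, ContinuousLinearMap.comp_zero, zero_add,
    ContinuousLinearMap.add_apply, ContinuousLinearMap.flip_apply,
    ContinuousLinearMap.zero_apply]
  exact (hu.contDiffAt.isSymmSndFDerivAt (by rw [minSmoothness_of_isRCLikeNormedField]; exact WithTop.coe_le_coe.mpr le_top)) _ _

lemma hasDerivAt_slice_t (hu : ContDiff ℝ (⊤ : ℕ∞) u) (t x : ℝ) :
    HasDerivAt (fun s => u (s, x)) (pt u (t, x)) t := by
  have h : DifferentiableAt ℝ (fun s => u (s, x)) t :=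
    ((hu.differentiable (by simp)) (t, x)).comp t
      (differentiableAt_id.prodMk (differentiableAt_const x))
  exact h.hasDerivAt

lemma hasDerivAt_slice_x (hu : ContDiff ℝ (⊤ : ℕ∞) u) (t x : ℝ) :
    HasDerivAt (fun y => u (t, y)) (px u (t, x)) x := by
  have h : DifferentiableAt ℝ (fun y => u (t, y)) x :=
    ((hu.differentiable (by simp)) (t, x)).comp x
      ((differentiableAt_const t).prodMk differentiableAt_id)
  exact h.hasDerivAt

lemma contDiff_slice_x (hu : ContDiff ℝ (⊤ : ℕ∞) u) (t : ℝ) :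
    ContDiff ℝ (⊤ : ℕ∞) (fun y => u (t, y)) :=
  hu.comp (contDiff_const.prodMk contDiff_id)

lemma pt_zero_outside {K : Set ℝ} (h : ∀ t x, x ∉ K → u (t, x) = 0) :
    ∀ t x, x ∉ K → pt u (t, x) = 0 := by
  intro t x hx
  have h0 : (fun s => u (s, x)) = fun _ : ℝ => (0:ℝ) := funext fun s => h s x hx
  show deriv (fun s => u (s, x)) t = 0
  rw [h0]; simp

lemma px_zero_outside {K : Set ℝ} (hK : IsClosed K) (h : ∀ t x, x ∉ K → u (t, x) = 0) :
    ∀ t x, x ∉ K → px u (t, x) = 0 := by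
  intro t x hx
  have hnb : (fun y => u (t, y)) =ᶠ[nhds x] fun _ => (0:ℝ) := by
    filter_upwards [hK.isOpen_compl.mem_nhds hx] with y hy using h t y hy
  show deriv (fun y => u (t, y)) x = 0
  rw [hnb.deriv_eq]; simp

end API

/-- Energy conservation for the rod transverse vibration equation. -/
theorem rod_energy_conservation
    (ρ E R : ℝ) (hρ : 0 < ρ) (hE : 0 < E) (hR : 0 < R)
    (u : ℝ × ℝ → ℝ) (hu : ContDiff ℝ (⊤ : ℕ∞) u)
    (K : Set ℝ) (hK : IsCompact K)
    (hsupp : ∀ t x : ℝ, x ∉ K → u (t, x) = 0)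
    (hPDE : ∀ t x : ℝ,
      ρ * pt (pt u) (t, x) - ρ * R ^ 2 * px (px (pt (pt u))) (t, x)
        + E * R ^ 2 * px (px (px (px u))) (t, x) = 0) :
    ∀ t : ℝ,
      (1 / 2) * ∫ x : ℝ,
        (ρ * (pt u (t, x)) ^ 2 + ρ * R ^ 2 * (px (pt u) (t, x)) ^ 2
          + E * R ^ 2 * (px (px u) (t, x)) ^ 2)
      = (1 / 2) * ∫ x : ℝ,
        (ρ * (pt u (0, x)) ^ 2 + ρ * R ^ 2 * (px (pt u) (0, x)) ^ 2
          + E * R ^ 2 * (px (px u) (0, x)) ^ 2) := by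
  have hcK : IsClosed K := hK.isClosed
  -- smoothness of iterated derivatives
  have h1 : ContDiff ℝ (⊤ : ℕ∞) (pt u) := contDiff_pt hu
  have h2 : ContDiff ℝ (⊤ : ℕ∞) (px u) := contDiff_px hu
  have h3 : ContDiff ℝ (⊤ : ℕ∞) (pt (pt u)) := contDiff_pt h1
  have h4 : ContDiff ℝ (⊤ : ℕ∞) (px (pt u)) := contDiff_px h1
  have h5 : ContDiff ℝ (⊤ : ℕ∞) (px (px u)) := contDiff_px h2
  have h6 : ContDiff ℝ (⊤ : ℕ∞) (px (pt (pt u))) := contDiff_px h3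
  have h7 : ContDiff ℝ (⊤ : ℕ∞) (px (px (pt u))) := contDiff_px h4
  have h8 : ContDiff ℝ (⊤ : ℕ∞) (px (px (px u))) := contDiff_px h5
  -- energy density and its time derivative and flux
  set e : ℝ → ℝ → ℝ := fun t x =>
    ρ * (pt u (t, x)) ^ 2 + ρ * R ^ 2 * (px (pt u) (t, x)) ^ 2
      + E * R ^ 2 * (px (px u) (t, x)) ^ 2 with he
  set D : ℝ → ℝ → ℝ := fun t x =>
    ρ * (2 * pt u (t, x) * pt (pt u) (t, x))
      + ρ * R ^ 2 * (2 * px (pt u) (t, x) * px (pt (pt u)) (t, x))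
      + E * R ^ 2 * (2 * px (px u) (t, x) * px (px (pt u)) (t, x)) with hD
  set Fl : ℝ → ℝ → ℝ := fun t x =>
    2 * (ρ * R ^ 2) * (pt u (t, x) * px (pt (pt u)) (t, x))
      - 2 * (E * R ^ 2) * (pt u (t, x) * px (px (px u)) (t, x))
      + 2 * (E * R ^ 2) * (px (pt u) (t, x) * px (px u) (t, x)) with hFl
  -- Claim A : time derivative of the density
  have claimA : ∀ t x : ℝ, HasDerivAt (fun s => e s x) (D t x) t := by
    intro t x
    have hA1 := hasDerivAt_slice_t h1 t x
    have hA2 := hasDerivAt_slice_t h4 t x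
    have hA3 := hasDerivAt_slice_t h5 t x
    rw [pt_px_comm h1] at hA2
    rw [pt_px_comm h2, pt_px_comm hu] at hA3
    have hcomb := (HasDerivAt.const_mul ρ (hA1.pow 2)).add
      ((HasDerivAt.const_mul (ρ * R ^ 2) (hA2.pow 2)).add
        (HasDerivAt.const_mul (E * R ^ 2) (hA3.pow 2)))
    simp only [he, hD]
    convert hcomb using 1
    · rfl
    · rfl
    · funext s; simp only [Pi.add_apply, Pi.pow_apply]; ring
    · push_cast; ring
  -- Claim B : the flux has spatial derivative D
  have claimB : ∀ t x : ℝ, HasDerivAt (fun y => Fl t y) (D t x) x := by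
    intro t x
    have b1 := hasDerivAt_slice_x h1 t x
    have b2 := hasDerivAt_slice_x h6 t x
    have b3 := hasDerivAt_slice_x h8 t x
    have b4 := hasDerivAt_slice_x h4 t x
    have b5 := hasDerivAt_slice_x h5 t x
    have hcomb := ((HasDerivAt.const_mul (2 * (ρ * R ^ 2)) (b1.mul b2)).sub
      (HasDerivAt.const_mul (2 * (E * R ^ 2)) (b1.mul b3))).add
      (HasDerivAt.const_mul (2 * (E * R ^ 2)) (b4.mul b5))
    simp only [hFl, hD]
    convert hcomb using 1
    · rfl
    · rfl
    · rfl
    linear_combination (2 * pt u (t, x)) * hPDE t x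
  -- vanishing outside K
  have z1 := pt_zero_outside hsupp
  have z2 := px_zero_outside hcK hsupp
  have z3 := pt_zero_outside z1
  have z4 := px_zero_outside hcK z1
  have z5 := px_zero_outside hcK z2
  have z6 := px_zero_outside hcK z3
  have z7 := px_zero_outside hcK z4
  have z8 := px_zero_outside hcK z5
  have ze : ∀ t x, x ∉ K → e t x = 0 := by
    intro t x hx; simp only [he, z1 t x hx, z4 t x hx, z5 t x hx]; ring
  have zD : ∀ t x, x ∉ K → D t x = 0 := by
    intro t x hx; simp only [hD, z1 t x hx, z4 t x hx, z5 t x hx]; ring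
  have zF : ∀ t x, x ∉ K → Fl t x = 0 := by
    intro t x hx; simp only [hFl, z1 t x hx, z4 t x hx]; ring
  -- joint continuity / smoothness of the auxiliary functions
  have hDsm : ContDiff ℝ (⊤ : ℕ∞) (fun p : ℝ × ℝ => D p.1 p.2) := by
    simp only [hD]
    exact ((contDiff_const.mul ((contDiff_const.mul h1).mul h3)).add
      (contDiff_const.mul ((contDiff_const.mul h4).mul h6))).add
      (contDiff_const.mul ((contDiff_const.mul h5).mul h7))
  have hDcont : Continuous (fun p : ℝ × ℝ => D p.1 p.2) := hDsm.continuous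
  have hesm : ContDiff ℝ (⊤ : ℕ∞) (fun p : ℝ × ℝ => e p.1 p.2) := by
    simp only [he]
    exact ((contDiff_const.mul (h1.pow 2)).add
      (contDiff_const.mul (h4.pow 2))).add (contDiff_const.mul (h5.pow 2))
  have hFlsm : ContDiff ℝ (⊤ : ℕ∞) (fun p : ℝ × ℝ => Fl p.1 p.2) := by
    simp only [hFl]
    exact ((contDiff_const.mul (h1.mul h6)).sub
      (contDiff_const.mul (h1.mul h8))).add
      (contDiff_const.mul (h4.mul h5))
  -- integral of D vanishes (integration by parts / divergence)
  have claimD : ∀ t : ℝ, (∫ x : ℝ, D t x) = 0 := by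
    intro t
    have hFl1 : ContDiff ℝ 1 (fun y => Fl t y) :=
      (contDiff_slice_x hFlsm t).of_le (by simp)
    have hFlcs : HasCompactSupport (fun y => Fl t y) :=
      HasCompactSupport.intro hK (fun x hx => zF t x hx)
    have hderiv : (fun x => deriv (fun y => Fl t y) x) = fun x => D t x :=
      funext fun x => (claimB t x).deriv
    have hDint : Integrable (fun x => D t x) := by
      refine Continuous.integrable_of_hasCompactSupport
        (hDcont.comp (continuous_const.prodMk continuous_id)) ?_
      exact HasCompactSupport.intro hK (fun x hx => zD t x hx)
    have hint : Integrable (fun x => deriv (fun y => Fl t y) x) := by rw [hderiv]; exact hDint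
    have hsplit := intervalIntegral.integral_Iic_add_Ioi (μ := volume) (b := (0:ℝ))
      hint.integrableOn hint.integrableOn
    rw [HasCompactSupport.integral_Iic_deriv_eq hFl1 hFlcs 0,
        HasCompactSupport.integral_Ioi_deriv_eq hFl1 hFlcs 0] at hsplit
    have : (∫ x : ℝ, deriv (fun y => Fl t y) x) = 0 := by
      rw [← hsplit]; ring
    rw [hderiv] at this; exact this
  -- differentiation under the integral sign
  have claimE : ∀ t0 : ℝ, HasDerivAt (fun τ => ∫ x : ℝ, e τ x) 0 t0 := by
    intro t0
    obtain ⟨C, hC⟩ := ((isCompact_Icc (a := t0 - 1) (b := t0 + 1)).prod hK).exists_bound_of_continuousOn hDcont.continuousOn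
    have hmeas : ∀ᶠ τ in nhds t0, AEStronglyMeasurable (fun x => e τ x) volume :=
      Filter.Eventually.of_forall fun τ =>
        ((hesm.continuous.comp (continuous_const.prodMk continuous_id)).aestronglyMeasurable)
    have hint : Integrable (fun x => e t0 x) := by
      refine Continuous.integrable_of_hasCompactSupport
        (hesm.continuous.comp (continuous_const.prodMk continuous_id)) ?_
      exact HasCompactSupport.intro hK (fun x hx => ze t0 x hx)
    have hmeas' : AEStronglyMeasurable (fun x => D t0 x) volume :=
      (hDcont.comp (continuous_const.prodMk continuous_id)).aestronglyMeasurable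
    have hbound : ∀ᵐ x : ℝ, ∀ τ ∈ Metric.ball t0 1, ‖D τ x‖ ≤ K.indicator (fun _ => |C|) x := by
      refine Filter.Eventually.of_forall fun x τ hτ => ?_
      by_cases hx : x ∈ K
      · have hmem : (τ, x) ∈ Set.Icc (t0 - 1) (t0 + 1) ×ˢ K := by
          constructor
          · have := Metric.mem_ball.mp hτ
            rw [Real.dist_eq] at this
            constructor <;> [linarith [abs_le.mp this.le] ; linarith [abs_le.mp this.le]]
          · exact hx
        rw [Set.indicator_of_mem hx]
        exact (hC (τ, x) hmem).trans (le_abs_self C)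
      · rw [Set.indicator_of_notMem hx]
        simp [zD τ x hx]
    have hbint : Integrable (K.indicator (fun _ : ℝ => |C|)) := by
      rw [integrable_indicator_iff hcK.measurableSet]
      exact integrableOn_const hK.measure_lt_top.ne
    have hdiff : ∀ᵐ x : ℝ, ∀ τ ∈ Metric.ball t0 1,
        HasDerivAt (fun τ' => e τ' x) (D τ x) τ :=
      Filter.Eventually.of_forall fun x τ _ => claimA τ x
    have := (hasDerivAt_integral_of_dominated_loc_of_deriv_le (Metric.ball_mem_nhds t0 one_pos) hmeas hint hmeas'
      hbound hbint hdiff).2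
    rw [claimD t0] at this
    exact this
  -- conclude
  have hconst : ∀ a b : ℝ, (∫ x : ℝ, e a x) = ∫ x : ℝ, e b x := by
    intro a b
    exact is_const_of_deriv_eq_zero (fun τ => (claimE τ).differentiableAt)
      (fun τ => (claimE τ).deriv) a b
  intro t
  have := hconst t 0
  simp only [he] at this
  rw [this]
end

section
/- Let μ > 0 and ν > 0, and set α = 1 + 3ν + 2μ, β = −2ν − μ, σ = ν/2. Then no root η ∈ ℂ of the quadratic σ η² + β η + (α − 2σ) = 0 lies in the real segment [−2, 2]; more precisely, every real root η of this quadratic satisfies η > 2 (and when μ² < 2ν the two roots are non-real complex conjugates). -/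
private lemma quad_pos (μ ν η : ℝ) (hμ : 0 < μ) (hν : 0 < ν) (h : η ≤ 2) :
    0 < (ν / 2) * η ^ 2 + (-2 * ν - μ) * η + ((1 + 3 * ν + 2 * μ) - 2 * (ν / 2)) := by
  nlinarith [mul_nonneg hμ.le (sub_nonneg.2 h), mul_nonneg hν.le (sq_nonneg (2 - η))]

/-- No root of the quadratic `σ η² + β η + (α − 2σ) = 0` lies in the real
segment `[−2, 2]`: real roots exceed 2, and when `μ² < 2ν` the roots are
non-real complex conjugates. -/
theorem quadratic_roots_outside_segment
    (μ ν : ℝ) (hμ : 0 < μ) (hν : 0 < ν)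
    (α β σ : ℝ)
    (hα : α = 1 + 3 * ν + 2 * μ) (hβ : β = -2 * ν - μ) (hσ : σ = ν / 2) :
    (∀ η : ℂ, (σ : ℂ) * η ^ 2 + (β : ℂ) * η + ((α : ℂ) - 2 * (σ : ℂ)) = 0 →
      ¬ (∃ r : ℝ, η = (r : ℂ) ∧ -2 ≤ r ∧ r ≤ 2))
    ∧ (∀ η : ℝ, σ * η ^ 2 + β * η + (α - 2 * σ) = 0 → η > 2)
    ∧ (μ ^ 2 < 2 * ν →
        ∀ η : ℂ, (σ : ℂ) * η ^ 2 + (β : ℂ) * η + ((α : ℂ) - 2 * (σ : ℂ)) = 0 →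
          η.im ≠ 0 ∧
            (σ : ℂ) * (starRingEnd ℂ η) ^ 2 + (β : ℂ) * (starRingEnd ℂ η)
              + ((α : ℂ) - 2 * (σ : ℂ)) = 0) := by
  subst hα hβ hσ
  refine ⟨?_, ?_, ?_⟩
  · rintro η heq ⟨r, rfl, h1, h2⟩
    have hreal : (ν / 2) * r ^ 2 + (-2 * ν - μ) * r + ((1 + 3 * ν + 2 * μ) - 2 * (ν / 2)) = 0 := by
      exact_mod_cast heq
    have := quad_pos μ ν r hμ hν h2
    linarith
  · intro η heq
    by_contra h
    push_neg at h
    have := quad_pos μ ν η hμ hν h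
    linarith
  · intro hd η heq
    constructor
    · intro him
      have hre : η = (η.re : ℂ) := Complex.ext rfl (by simp [him])
      rw [hre] at heq
      have hreal : (ν / 2) * η.re ^ 2 + (-2 * ν - μ) * η.re
          + ((1 + 3 * ν + 2 * μ) - 2 * (ν / 2)) = 0 := by exact_mod_cast heq
      nlinarith [sq_nonneg (2 * (ν / 2) * η.re + (-2 * ν - μ))]
    · have := congrArg (starRingEnd ℂ) heq
      simpa [map_add, map_mul, map_pow, map_sub, map_div₀, map_ofNat, Complex.conj_ofReal] using this
end

section
/- Let μ ≥ 0, ν ≥ 0 and t ∈ [−1, 1]. Set d = 2ν(1−t)² + 2μ(1−t) + 1 and A = 2(1 + 2μ(1−t))/d. Then: (i) d = 2νt² − 2(2ν+μ)t + 1 + 2ν + 2μ; (ii) d > 0; (iii) 0 < A ≤ 2; and (iv) every complex root z of z² − Az + 1 = 0 satisfies |z| = 1. Consequently the amplification matrix of the Crank–Nicolson scheme in Fourier variables (with t = cos(ξh)) has both eigenvalues of modulus exactly 1 for every real dual variable ξ, i.e. the scheme approximating the Cauchy problem for the rod equation is absolutely stable. -/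
/-!
The quadratic `z² - A z + 1` has real coefficients and constant term `1`, so when its discriminant
`A² - 4` is nonpositive its roots are complex conjugates with product `1`, hence of modulus `1`.
For the Crank–Nicolson scheme, writing the denominator in powers of `1 - t` (with `t = cos(ξh)`)
shows it is at least the numerator `1 + 2μ(1 - t)`, so `0 < A ≤ 2`.
-/

open ComplexConjugate

theorem Complex.norm_eq_one_of_sq_sub_mul_add_one_eq_zero {a : ℝ} (ha : |a| ≤ 2) {z : ℂ}
    (hz : z ^ 2 - a * z + 1 = 0) : ‖z‖ = 1 := by
  have hconj : conj z ^ 2 - a * conj z + 1 = 0 := by simpa using congrArg conj hz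
  have hfactor : (z - conj z) * (z + conj z - a) = 0 := by linear_combination hz - hconj
  rcases mul_eq_zero.1 hfactor with hreal | hsum
  · obtain ⟨x, rfl⟩ := Complex.conj_eq_iff_real.1 (sub_eq_zero.1 hreal).symm
    have hx : x ^ 2 - a * x + 1 = 0 := by exact_mod_cast hz
    -- `x² + 1 = a x ≤ 2 |x|`
    have hsq : (|x| - 1) ^ 2 ≤ 0 := by
      nlinarith [le_abs_self (a * x), abs_mul a x, sq_abs x,
        mul_le_mul_of_nonneg_right ha (abs_nonneg x)]
    rw [Complex.norm_real, Real.norm_eq_abs]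
    nlinarith [sq_nonneg (|x| - 1)]
  · have hprod : z * conj z = 1 := by linear_combination z * hsum - hz
    rw [Complex.mul_conj'] at hprod
    exact (pow_eq_one_iff_of_nonneg (norm_nonneg z) two_ne_zero).1 (by exact_mod_cast hprod)

section CrankNicolson

theorem crankNicolson_trace_eq (μ ν t : ℝ) :
    -(4 * μ * t - 2 - 4 * μ) / (2 * ν * t ^ 2 - 2 * (2 * ν + μ) * t + 1 + 2 * ν + 2 * μ)
      = 2 * (1 + 2 * μ * (1 - t)) / (2 * ν * (1 - t) ^ 2 + 2 * μ * (1 - t) + 1) := by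
  ring_nf

variable {μ ν t : ℝ}

theorem crankNicolson_denom_pos (hμ : 0 ≤ μ) (hν : 0 ≤ ν) (ht : t ≤ 1) :
    0 < 2 * ν * (1 - t) ^ 2 + 2 * μ * (1 - t) + 1 := by
  have : 0 ≤ 1 - t := by linarith
  positivity

theorem crankNicolson_trace_pos (hμ : 0 ≤ μ) (hν : 0 ≤ ν) (ht : t ≤ 1) :
    0 < 2 * (1 + 2 * μ * (1 - t)) / (2 * ν * (1 - t) ^ 2 + 2 * μ * (1 - t) + 1) := by
  have : 0 ≤ 1 - t := by linarith
  exact div_pos (by positivity) (crankNicolson_denom_pos hμ hν ht)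

theorem crankNicolson_trace_le_two (hμ : 0 ≤ μ) (hν : 0 ≤ ν) (ht : t ≤ 1) :
    2 * (1 + 2 * μ * (1 - t)) / (2 * ν * (1 - t) ^ 2 + 2 * μ * (1 - t) + 1) ≤ 2 := by
  rw [div_le_iff₀ (crankNicolson_denom_pos hμ hν ht)]
  nlinarith [mul_nonneg hν (sq_nonneg (1 - t))]

theorem abs_crankNicolson_trace_le_two (hμ : 0 ≤ μ) (hν : 0 ≤ ν) (ht : t ≤ 1) :
    |2 * (1 + 2 * μ * (1 - t)) / (2 * ν * (1 - t) ^ 2 + 2 * μ * (1 - t) + 1)| ≤ 2 :=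
  abs_le.2 ⟨by linarith [crankNicolson_trace_pos hμ hν ht], crankNicolson_trace_le_two hμ hν ht⟩

end CrankNicolson

theorem crank_nicolson_absolute_stability_general
    (μ ν : ℝ) (hμ : 0 ≤ μ) (hν : 0 ≤ ν)
    (t : ℝ) (ht₂ : t ≤ 1)
    (d A : ℝ)
    (hd : d = 2 * ν * (1 - t) ^ 2 + 2 * μ * (1 - t) + 1)
    (hA : A = 2 * (1 + 2 * μ * (1 - t)) / d) :
    d = 2 * ν * t ^ 2 - 2 * (2 * ν + μ) * t + 1 + 2 * ν + 2 * μ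
    ∧ 0 < d
    ∧ (0 < A ∧ A ≤ 2)
    ∧ (∀ z : ℂ, z ^ 2 - (A : ℂ) * z + 1 = 0 → ‖z‖ = 1)
    ∧ (∀ ξ hstep : ℝ, ∀ z : ℂ,
        z ^ 2 - ((-(4 * μ * Real.cos (ξ * hstep) - 2 - 4 * μ) /
            (2 * ν * Real.cos (ξ * hstep) ^ 2 - 2 * (2 * ν + μ) * Real.cos (ξ * hstep)
              + 1 + 2 * ν + 2 * μ) : ℝ) : ℂ) * z + 1 = 0 →
          ‖z‖ = 1) := by
  subst hd hA
  refine ⟨by ring, crankNicolson_denom_pos hμ hν ht₂,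
    ⟨crankNicolson_trace_pos hμ hν ht₂, crankNicolson_trace_le_two hμ hν ht₂⟩,
    fun z hz => Complex.norm_eq_one_of_sq_sub_mul_add_one_eq_zero
      (abs_crankNicolson_trace_le_two hμ hν ht₂) hz, ?_⟩
  intro ξ hstep z hz
  rw [crankNicolson_trace_eq] at hz
  exact Complex.norm_eq_one_of_sq_sub_mul_add_one_eq_zero
    (abs_crankNicolson_trace_le_two hμ hν (Real.cos_le_one _)) hz

/-- Absolute stability of the Crank–Nicolson scheme for the Cauchy problem of
the rod transverse vibration equation: the amplification-matrix eigenvalues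
have modulus exactly 1 for all Fourier dual variables. -/
theorem crank_nicolson_absolute_stability
    (μ ν : ℝ) (hμ : 0 ≤ μ) (hν : 0 ≤ ν)
    (t : ℝ) (ht₁ : -1 ≤ t) (ht₂ : t ≤ 1)
    (d A : ℝ)
    (hd : d = 2 * ν * (1 - t) ^ 2 + 2 * μ * (1 - t) + 1)
    (hA : A = 2 * (1 + 2 * μ * (1 - t)) / d) :
    d = 2 * ν * t ^ 2 - 2 * (2 * ν + μ) * t + 1 + 2 * ν + 2 * μ
    ∧ 0 < d
    ∧ (0 < A ∧ A ≤ 2)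
    ∧ (∀ z : ℂ, z ^ 2 - (A : ℂ) * z + 1 = 0 → ‖z‖ = 1)
    ∧ (∀ ξ hstep : ℝ, ∀ z : ℂ,
        z ^ 2 - ((-(4 * μ * Real.cos (ξ * hstep) - 2 - 4 * μ) /
            (2 * ν * Real.cos (ξ * hstep) ^ 2 - 2 * (2 * ν + μ) * Real.cos (ξ * hstep)
              + 1 + 2 * ν + 2 * μ) : ℝ) : ℂ) * z + 1 = 0 →
          ‖z‖ = 1) :=
  crank_nicolson_absolute_stability_general μ ν hμ hν t ht₂ d A hd hA
end
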